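/- arXiv:2501.10942 — 2 statements merged into one kernel-verified Lean document; each statement's English description precedes it below -/
import Mathlib

section
/- Suppose u_i = z_{g(i)} + e_i for i = 1,…,p with p ≥ 3, where g : [p] → [K] is surjective onto clusters each of size at least 2 (and p ≥ 3 ensures an index l ∉ {i,j} exists in some cluster), the z_k's have mean zero with Cov(z_k, z_{k'}) forming a positive definite K×K matrix, the e_i's are mean zero, pairwise uncorrelated, and uncorrelated with every z_k. If g(i) ≠ g(j) and there exists l ∉ {i,j} with g(l) = g(i), then Cov(u_i - u_j, u_l) = Cov(z_{g(i)}, z_{g(i)}) - Cov(z_{g(j)}, z_{g(i)}), and in particular max_{l ∉ {i,j}} |Cov(u_i - u_j, u_l)| > 0. -/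
/-!
Bilinearity of the covariance and the uncorrelatedness of the noise reduce `Cov(u_i - u_j, u_l)`
to `Cov(z_{g i}, z_{g l}) - Cov(z_{g j}, z_{g l})`. Evaluating the positive definite covariance
matrix of `z` at `δ_{g i} - δ_{g j}` shows that the two differences obtained for `g l = g i` and
for `g l = g j` have positive sum, so one of them is nonzero, and it is realised by `l` or by a
second member of the cluster of `j`.
-/

open MeasureTheory

/-- Covariance of two real random variables: `Cov(X,Y) = E[XY] - E[X]E[Y]`. -/
noncomputable def cov {Ω : Type*} [MeasurableSpace Ω] (μ : Measure Ω) (X Y : Ω → ℝ) : ℝ :=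
  (∫ ω, X ω * Y ω ∂μ) - (∫ ω, X ω ∂μ) * (∫ ω, Y ω ∂μ)

section cov

open scoped ProbabilityTheory

variable {Ω : Type*} [MeasurableSpace Ω] {μ : Measure Ω} {X Y Z E F : Ω → ℝ}

theorem cov_comm (X Y : Ω → ℝ) : cov μ X Y = cov μ Y X := by
  simp only [cov, mul_comm (X _), mul_comm (∫ ω, X ω ∂μ)]

theorem cov_eq_covariance [IsProbabilityMeasure μ] (hX : MemLp X 2 μ) (hY : MemLp Y 2 μ) :
    cov μ X Y = cov[X, Y; μ] :=
  (ProbabilityTheory.covariance_eq_sub hX hY).symm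

variable [IsProbabilityMeasure μ]

theorem cov_fun_sub_left (hX : MemLp X 2 μ) (hY : MemLp Y 2 μ) (hZ : MemLp Z 2 μ) :
    cov μ (fun ω => X ω - Y ω) Z = cov μ X Z - cov μ Y Z := by
  change cov μ (X - Y) Z = _
  rw [cov_eq_covariance (hX.sub hY) hZ, cov_eq_covariance hX hZ, cov_eq_covariance hY hZ]
  exact ProbabilityTheory.covariance_fun_sub_left hX hY hZ

theorem cov_add_add_of_uncorrelated (hX : MemLp X 2 μ) (hE : MemLp E 2 μ)
    (hY : MemLp Y 2 μ) (hF : MemLp F 2 μ)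
    (hEY : cov μ E Y = 0) (hXF : cov μ X F = 0) (hEF : cov μ E F = 0) :
    cov μ (X + E) (Y + F) = cov μ X Y := by
  rw [cov_eq_covariance hE hY] at hEY
  rw [cov_eq_covariance hX hF] at hXF
  rw [cov_eq_covariance hE hF] at hEF
  rw [cov_eq_covariance (hX.add hE) (hY.add hF), cov_eq_covariance hX hY]
  rw [ProbabilityTheory.covariance_add_left hX hE (hY.add hF),
    ProbabilityTheory.covariance_add_right hX hY hF,
    ProbabilityTheory.covariance_add_right hE hY hF, hEY, hXF, hEF]
  ring

theorem cov_sub_of_signal_add_noise {ι : Type*} {s e u : ι → Ω → ℝ}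
    (hs : ∀ i, MemLp (s i) 2 μ) (he : ∀ i, MemLp (e i) 2 μ)
    (hes : ∀ i m, cov μ (e i) (s m) = 0) (hee : ∀ i m, i ≠ m → cov μ (e i) (e m) = 0)
    (hu : ∀ i ω, u i ω = s i ω + e i ω) {i j l : ι} (hil : i ≠ l) (hjl : j ≠ l) :
    cov μ (fun ω => u i ω - u j ω) (u l) = cov μ (s i) (s l) - cov μ (s j) (s l) := by
  have hu' : ∀ m, u m = s m + e m := fun m => funext (hu m)
  have hu2 : ∀ m, MemLp (u m) 2 μ := fun m => hu' m ▸ (hs m).add (he m)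
  have hcross : ∀ m, m ≠ l → cov μ (u m) (u l) = cov μ (s m) (s l) := by
    intro m hm
    rw [hu' m, hu' l]
    exact cov_add_add_of_uncorrelated (hs m) (he m) (hs l) (he l) (hes m l)
      (cov_comm (μ := μ) _ _ ▸ hes l m) (hee m l hm)
  rw [cov_fun_sub_left (hu2 i) (hu2 j) (hu2 l), hcross i hil, hcross j hjl]

end cov

theorem Matrix.PosDef.add_diag_sub_offDiag_pos {n : Type*} [Fintype n] [DecidableEq n]
    {A : Matrix n n ℝ} (hA : A.PosDef) {k k' : n} (hkk' : k ≠ k') :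
    0 < A k k + A k' k' - A k k' - A k' k := by
  have hv : (Pi.single k 1 - Pi.single k' 1 : n → ℝ) ≠ 0 := by
    intro h
    simpa [hkk'] using congrFun h k
  have := hA.dotProduct_mulVec_pos hv
  simp only [star_trivial, Matrix.mulVec_sub, Matrix.mulVec_single_one, sub_dotProduct,
    dotProduct_sub, single_dotProduct, one_mul, Matrix.col_apply] at this
  linarith

/-- In the model `u_i = z_{g(i)} + e_i` with `p ≥ 3`, `g` surjective with each
cluster of size at least 2, mean-zero `z`'s with positive definite covariance matrix, and
mean-zero pairwise uncorrelated `e`'s uncorrelated with every `z_k`: if `g(i) ≠ g(j)` and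
there is `l ∉ {i,j}` with `g(l) = g(i)`, then
`Cov(u_i - u_j, u_l) = Cov(z_{g(i)}, z_{g(i)}) - Cov(z_{g(j)}, z_{g(i)})`, and
`max_{l' ∉ {i,j}} |Cov(u_i - u_j, u_{l'})| > 0`. -/
theorem cov_diff_of_different_clusters
    {Ω : Type*} [MeasurableSpace Ω] (μ : Measure Ω) [IsProbabilityMeasure μ]
    {p K : ℕ} (hp : 3 ≤ p) (g : Fin p → Fin K)
    (hgsize : ∀ k, 2 ≤ (Finset.univ.filter (fun i => g i = k)).card)
    (z : Fin K → Ω → ℝ) (e : Fin p → Ω → ℝ)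
    (hz2 : ∀ k, MemLp (z k) 2 μ) (he2 : ∀ i, MemLp (e i) 2 μ)
    (hSz : (Matrix.of (fun k k' : Fin K => cov μ (z k) (z k'))).PosDef)
    (hee : ∀ i j, i ≠ j → cov μ (e i) (e j) = 0)
    (hez : ∀ i k, cov μ (e i) (z k) = 0)
    (u : Fin p → Ω → ℝ) (hu : ∀ i ω, u i ω = z (g i) ω + e i ω)
    (i j l : Fin p) (hij : g i ≠ g j) (hl₁ : l ≠ i) (hl₂ : l ≠ j) (hl₃ : g l = g i) :
    cov μ (fun ω => u i ω - u j ω) (u l) =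
      cov μ (z (g i)) (z (g i)) - cov μ (z (g j)) (z (g i)) ∧
    0 < (Finset.univ.filter (fun l' : Fin p => l' ≠ i ∧ l' ≠ j)).sup'
      (by
        rw [Finset.filter_nonempty_iff]
        by_contra hcon
        push_neg at hcon
        have hsub : (Finset.univ : Finset (Fin p)) ⊆ {i, j} := by
          intro x _
          rcases eq_or_ne x i with h | h
          · simp [h]
          · have := hcon x (Finset.mem_univ x) h
            simp [this]
        have hcard := Finset.card_le_card hsub
        have h2 : ({i, j} : Finset (Fin p)).card ≤ 2 :=
          (Finset.card_insert_le _ _).trans (by simp)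
        have : p ≤ 2 := by
          calc p = (Finset.univ : Finset (Fin p)).card := by simp
          _ ≤ ({i, j} : Finset (Fin p)).card := hcard
          _ ≤ 2 := h2
        omega)
      (fun l' => |cov μ (fun ω => u i ω - u j ω) (u l')|) := by
  have hcov : ∀ l', l' ≠ i → l' ≠ j → cov μ (fun ω => u i ω - u j ω) (u l') =
      cov μ (z (g i)) (z (g l')) - cov μ (z (g j)) (z (g l')) := fun l' hi hj =>
    cov_sub_of_signal_add_noise (fun m => hz2 (g m)) he2 (fun m k => hez m (g k)) hee hu
      hi.symm hj.symm
  have hfirst := hcov l hl₁ hl₂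
  rw [hl₃] at hfirst
  refine ⟨hfirst, ?_⟩
  have hpos := hSz.add_diag_sub_offDiag_pos hij
  simp only [Matrix.of_apply, cov_comm (z (g j)) (z (g i))] at hpos
  rw [Finset.lt_sup'_iff]
  by_cases hd : cov μ (z (g i)) (z (g i)) - cov μ (z (g j)) (z (g i)) = 0
  · obtain ⟨l', hl', hl'j⟩ := Finset.exists_mem_ne (hgsize (g j)) j
    have hl'g : g l' = g j := (Finset.mem_filter.mp hl').2
    have hl'i : l' ≠ i := fun h => hij (h ▸ hl'g)
    refine ⟨l', by simp [hl'i, hl'j], ?_⟩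
    rw [hcov l' hl'i hl'j, hl'g, abs_pos]
    intro h
    rw [cov_comm (z (g j))] at hd
    linarith
  · exact ⟨l, by simp [hl₁, hl₂], hfirst ▸ abs_pos.mpr hd⟩
end

section
/- Let Σ and Σ_u be n×n positive definite matrices such that Σ - Σ_u is positive semidefinite (equivalently, Σ_u⁻¹ - Σ⁻¹ is positive semidefinite). Then for any symmetric n×n matrix D, ‖Σ^{-1/2} D Σ^{-1/2}‖_F ≤ ‖Σ_u^{-1/2} D Σ_u^{-1/2}‖_F, i.e., ‖D‖_Σ ≤ ‖D‖_{Σ_u} in the weighted quadratic norm ‖D‖_A = n^{-1/2}‖A^{-1/2} D A^{-1/2}‖_F. -/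
/-!
Since `‖A^{-1/2} D A^{-1/2}‖_F² = tr(D A⁻¹ D A⁻¹)` and inversion reverses the Loewner order on
positive definite matrices, it suffices that `X ↦ tr(D X D X)` is monotone on positive
semidefinite matrices. For `0 ⪯ X ⪯ Y`, both `tr(D X D (Y - X))` and `tr(D Y D (Y - X))` are
traces of products of two positive semidefinite matrices, hence nonnegative, and by cyclicity of
the trace their sum is `tr(D Y D Y) - tr(D X D X)`.
-/

open Matrix

/-- The Frobenius norm of a real matrix. -/
noncomputable def frobNorm {n : ℕ} (M : Matrix (Fin n) (Fin n) ℝ) : ℝ :=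
  Real.sqrt (∑ i, ∑ j, (M i j) ^ 2)

/-- The positive semidefinite square root of a positive semidefinite matrix
(the definition `Matrix.PosSemidef.sqrt` of the older Mathlib, since removed). -/
noncomputable def Matrix.PosSemidef.sqrt {n : Type*} [Fintype n] [DecidableEq n]
    {A : Matrix n n ℝ} (hA : A.PosSemidef) : Matrix n n ℝ :=
  hA.1.eigenvectorUnitary.1 * diagonal ((↑) ∘ (√·) ∘ hA.1.eigenvalues) *
  (star hA.1.eigenvectorUnitary : Matrix n n ℝ)

open scoped MatrixOrder ComplexOrder

namespace Matrix

variable {n : Type*} [Fintype n] [DecidableEq n]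

lemma PosSemidef.sqrt_eq_cfcSqrt {A : Matrix n n ℝ} (hA : A.PosSemidef) :
    hA.sqrt = CFC.sqrt A := by
  rw [CFC.sqrt_eq_real_sqrt A hA.nonneg, cfcₙ_eq_cfc, hA.1.cfc_eq]
  rfl

lemma trace_mul_nonneg_of_posSemidef {M N : Matrix n n ℝ} (hM : M.PosSemidef)
    (hN : N.PosSemidef) : 0 ≤ (M * N).trace := by
  obtain ⟨B, hB, rfl⟩ : ∃ B : Matrix n n ℝ, Bᴴ = B ∧ N = B * B :=
    ⟨CFC.sqrt N, (CFC.sqrt_nonneg N).isSelfAdjoint, (CFC.sqrt_mul_sqrt_self N hN.nonneg).symm⟩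
  rw [← Matrix.mul_assoc, trace_mul_comm, ← Matrix.mul_assoc]
  have hBMB := hM.mul_mul_conjTranspose_same B
  rw [hB] at hBMB
  exact hBMB.trace_nonneg

lemma trace_mul_mul_mul_le_of_posSemidef_sub {X Y D : Matrix n n ℝ} (hX : X.PosSemidef)
    (hXY : (Y - X).PosSemidef) (hD : Dᵀ = D) :
    (D * X * D * X).trace ≤ (D * Y * D * Y).trace := by
  have hY : Y.PosSemidef := by simpa using hX.add hXY
  have hDXD : (D * X * D).PosSemidef := by simpa [hD] using hX.mul_mul_conjTranspose_same D
  have hDYD : (D * Y * D).PosSemidef := by simpa [hD] using hY.mul_mul_conjTranspose_same D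
  have h₁ := trace_mul_nonneg_of_posSemidef hDXD hXY
  have h₂ := trace_mul_nonneg_of_posSemidef hDYD hXY
  have hcycle : (D * X * D * Y).trace = (D * Y * D * X).trace := by
    rw [Matrix.mul_assoc (D * X), trace_mul_comm, ← Matrix.mul_assoc]
  rw [Matrix.mul_sub, trace_sub] at h₁ h₂
  linarith

lemma inv_sub_inv_eq {R : Type*} [CommRing R] {A B : Matrix n n R} (hA : IsUnit A.det)
    (hB : IsUnit B.det) :
    B⁻¹ - A⁻¹ = A⁻¹ * (A - B) * A⁻¹ + A⁻¹ * (A - B) * B⁻¹ * (A - B) * A⁻¹ := by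
  simp only [Matrix.mul_sub, Matrix.sub_mul, Matrix.mul_assoc, nonsing_inv_mul _ hA,
    mul_nonsing_inv _ hA, nonsing_inv_mul _ hB, mul_nonsing_inv _ hB, Matrix.mul_one,
    Matrix.one_mul]
  abel

lemma PosDef.posSemidef_inv_sub_inv {𝕜 : Type*} [RCLike 𝕜] {A B : Matrix n n 𝕜} (hA : A.PosDef)
    (hB : B.PosDef) (hAB : (A - B).PosSemidef) : (B⁻¹ - A⁻¹).PosSemidef := by
  have hAinv : (A⁻¹)ᴴ = A⁻¹ := hA.posSemidef.inv.isHermitian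
  rw [inv_sub_inv_eq (A.isUnit_iff_isUnit_det.mp hA.isUnit)
    (B.isUnit_iff_isUnit_det.mp hB.isUnit)]
  refine .add ?_ ?_
  · simpa [hAinv] using hAB.mul_mul_conjTranspose_same A⁻¹
  · simpa [hAinv, hAB.isHermitian.eq, Matrix.mul_assoc] using
      hB.posSemidef.inv.mul_mul_conjTranspose_same (A⁻¹ * (A - B))

end Matrix

lemma frobNorm_eq_sqrt_trace {n : ℕ} (M : Matrix (Fin n) (Fin n) ℝ) :
    frobNorm M = √(Mᵀ * M).trace := by
  rw [frobNorm, Finset.sum_comm]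
  simp [trace, mul_apply, sq]

lemma frobNorm_inv_sqrt_mul_mul_inv_sqrt {n : ℕ} {A : Matrix (Fin n) (Fin n) ℝ}
    (hA : A.PosSemidef) {D : Matrix (Fin n) (Fin n) ℝ} (hD : Dᵀ = D) :
    frobNorm (hA.sqrt⁻¹ * D * hA.sqrt⁻¹) = √(D * A⁻¹ * D * A⁻¹).trace := by
  obtain ⟨R, hR, hRT, hRR⟩ :
      ∃ R : Matrix (Fin n) (Fin n) ℝ, hA.sqrt⁻¹ = R ∧ Rᵀ = R ∧ R * R = A⁻¹ :=
    ⟨CFC.sqrt A⁻¹, by rw [hA.sqrt_eq_cfcSqrt, hA.inv_sqrt], (CFC.sqrt_nonneg _).isSelfAdjoint,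
      CFC.sqrt_mul_sqrt_self _ hA.inv.nonneg⟩
  rw [hR, frobNorm_eq_sqrt_trace, transpose_mul, transpose_mul, hRT, hD, ← hRR]
  congr 1
  calc (R * (D * R) * (R * D * R)).trace = (R * (D * (R * R) * D * R)).trace := by
        simp only [Matrix.mul_assoc]
    _ = (D * (R * R) * D * (R * R)).trace := by
        rw [trace_mul_comm]
        simp only [Matrix.mul_assoc]

/-- If `Σ` and `Σ_u` are positive definite with `Σ - Σ_u` positive semidefinite,
then for any symmetric `D`, `‖Σ^{-1/2} D Σ^{-1/2}‖_F ≤ ‖Σ_u^{-1/2} D Σ_u^{-1/2}‖_F`. -/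
theorem weighted_norm_mono {n : ℕ}
    (S Su : Matrix (Fin n) (Fin n) ℝ) (hS : S.PosDef) (hSu : Su.PosDef)
    (hdiff : (S - Su).PosSemidef)
    (D : Matrix (Fin n) (Fin n) ℝ) (hD : Dᵀ = D) :
    frobNorm ((hS.posSemidef.sqrt)⁻¹ * D * (hS.posSemidef.sqrt)⁻¹) ≤
      frobNorm ((hSu.posSemidef.sqrt)⁻¹ * D * (hSu.posSemidef.sqrt)⁻¹) := by
  rw [frobNorm_inv_sqrt_mul_mul_inv_sqrt _ hD, frobNorm_inv_sqrt_mul_mul_inv_sqrt _ hD]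
  gcongr
  exact trace_mul_mul_mul_le_of_posSemidef_sub hS.posSemidef.inv
    (hS.posSemidef_inv_sub_inv hSu hdiff) hD
end
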